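/- Let δ > 0, let P > 0 solve PA + AᵀP − 2δ PBBᵀP + I < 0, set K = BᵀP, and let H ∈ ℂ^{N×N} be a matrix all of whose eigenvalues have real part at least δ. Then the matrix I_N ⊗ A − H ⊗ (BK) is Hurwitz. -/

import Mathlib

/-!
An eigenvector of `I_N ⊗ A − H ⊗ BBᵀP` can be chosen to be also an eigenvector of `H ⊗ I_n`,
since the two matrices commute; on it `H` acts by one of its eigenvalues `λ`, which turns it into
an eigenvector of `I_N ⊗ (A − λ BBᵀP)`. So every eigenvalue of the Kronecker matrix is an
eigenvalue of some `X = A − λ BBᵀP` with `Re λ ≥ δ`. For such `X` the Riccati inequality gives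
the Lyapunov inequality `PX + XᴴP < 0`, because `PX + XᴴP = PA + AᵀP − 2 Re λ · PBBᵀP`, and
`Xv = μv` then yields `2 Re μ · v*Pv = v*(PX + XᴴP)v < 0`.
-/

open Matrix
open scoped Kronecker ComplexOrder

theorem Module.End.exists_hasEigenvector_of_commute {K V : Type*} [Field K] [IsAlgClosed K]
    [AddCommGroup V] [Module K V] [FiniteDimensional K V] {f g : Module.End K V}
    (h : Commute f g) {μ : K} (hμ : f.HasEigenvalue μ) :
    ∃ c x, f.HasEigenvector μ x ∧ g.HasEigenvector c x := by
  have : Nontrivial (f.eigenspace μ) := Submodule.nontrivial_iff_ne_bot.mpr hμ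
  obtain ⟨c, hc⟩ :=
    Module.End.exists_eigenvalue (g.restrict (Module.End.mapsTo_genEigenspace_of_comm h μ 1))
  obtain ⟨⟨x, hxE⟩, hx⟩ := hc.exists_hasEigenvector
  have hx0 : x ≠ 0 := by simpa using hx.2
  exact ⟨c, x, ⟨hxE, hx0⟩,
    Module.End.mem_eigenspace_iff.mpr (congrArg Subtype.val hx.apply_eq_smul), hx0⟩

namespace Matrix

section Kronecker

variable {K ι κ : Type*} [Field K] [Fintype ι] [DecidableEq ι] [Fintype κ] [DecidableEq κ]

theorem mem_spectrum_of_mulVec_eq_smul {X : Matrix ι ι K} {c : K} {v : ι → K} (hv : v ≠ 0)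
    (h : X *ᵥ v = c • v) : c ∈ spectrum K X := by
  rw [← spectrum_toLin']
  exact (Module.End.hasEigenvalue_of_hasEigenvector
    ⟨Module.End.mem_eigenspace_iff.mpr (by rwa [toLin'_apply]), hv⟩).mem_spectrum

theorem mem_spectrum_of_kronecker_one_mulVec_eq_smul {X : Matrix ι ι K} {c : K}
    {z : ι × κ → K} (hz : z ≠ 0) (h : (X ⊗ₖ (1 : Matrix κ κ K)) *ᵥ z = c • z) :
    c ∈ spectrum K X := by
  obtain ⟨⟨i₀, k₀⟩, hz₀⟩ := Function.ne_iff.mp hz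
  refine mem_spectrum_of_mulVec_eq_smul (v := fun i => z (i, k₀))
    (Function.ne_iff.mpr ⟨i₀, hz₀⟩) (funext fun i => ?_)
  simpa [mulVec, dotProduct, Fintype.sum_prod_type, one_apply] using congrFun h (i, k₀)

theorem mem_spectrum_of_one_kronecker_mulVec_eq_smul {X : Matrix ι ι K} {c : K}
    {z : κ × ι → K} (hz : z ≠ 0) (h : ((1 : Matrix κ κ K) ⊗ₖ X) *ᵥ z = c • z) :
    c ∈ spectrum K X := by
  obtain ⟨⟨k₀, i₀⟩, hz₀⟩ := Function.ne_iff.mp hz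
  refine mem_spectrum_of_mulVec_eq_smul (v := fun i => z (k₀, i))
    (Function.ne_iff.mpr ⟨i₀, hz₀⟩) (funext fun i => ?_)
  simpa [mulVec, dotProduct, Fintype.sum_prod_type, one_apply] using congrFun h (k₀, i)

theorem exists_mem_spectrum_of_mem_spectrum_one_kronecker_sub_kronecker [IsAlgClosed K]
    (A M : Matrix ι ι K) (H : Matrix κ κ K) {μ : K}
    (hμ : μ ∈ spectrum K (1 ⊗ₖ A - H ⊗ₖ M)) :
    ∃ c ∈ spectrum K H, μ ∈ spectrum K (A - c • M) := by
  have hcomm : Commute (1 ⊗ₖ A - H ⊗ₖ M) (H ⊗ₖ 1) := by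
    refine Commute.sub_left ?_ ?_ <;> simp [Commute, SemiconjBy, ← mul_kronecker_mul]
  rw [← spectrum_toLin', ← Module.End.hasEigenvalue_iff_mem_spectrum] at hμ
  obtain ⟨c, z, hLz, hHz⟩ := Module.End.exists_hasEigenvector_of_commute
    (hcomm.map (toLinAlgEquiv' (R := K) (n := κ × ι))) hμ
  have hLz' := hLz.apply_eq_smul
  have hHz' := hHz.apply_eq_smul
  simp only [toLinAlgEquiv'_apply] at hLz' hHz'
  refine ⟨c, mem_spectrum_of_kronecker_one_mulVec_eq_smul hHz.2 hHz',
    mem_spectrum_of_one_kronecker_mulVec_eq_smul hLz.2 ?_⟩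
  calc (1 ⊗ₖ (A - c • M)) *ᵥ z = (1 ⊗ₖ A) *ᵥ z - (1 ⊗ₖ M) *ᵥ (c • z) := by
        rw [sub_eq_add_neg, ← neg_smul, kronecker_add, kronecker_smul, add_mulVec, smul_mulVec,
          mulVec_smul, neg_smul, ← sub_eq_add_neg]
    _ = (1 ⊗ₖ A - H ⊗ₖ M) *ᵥ z := by
        rw [← hHz', mulVec_mulVec, ← mul_kronecker_mul, one_mul, mul_one, sub_mulVec]
    _ = μ • z := hLz'

end Kronecker

theorem re_lt_zero_of_mem_spectrum_of_posDef_lyapunov {𝕜 ι : Type*} [RCLike 𝕜]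
    [Fintype ι] [DecidableEq ι] {X P : Matrix ι ι 𝕜} (hP : P.PosDef)
    (hX : (-(P * X + Xᴴ * P)).PosDef) {μ : 𝕜} (hμ : μ ∈ spectrum 𝕜 X) : RCLike.re μ < 0 := by
  rw [← spectrum_toLin', ← Module.End.hasEigenvalue_iff_mem_spectrum] at hμ
  obtain ⟨v, hv⟩ := hμ.exists_hasEigenvector
  have hXv : X *ᵥ v = μ • v := by simpa using hv.apply_eq_smul
  obtain ⟨r, hr, hPv⟩ := RCLike.pos_iff_exists_ofReal.mp (hP.dotProduct_mulVec_pos hv.2)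
  have hquad : star v ⬝ᵥ ((P * X + Xᴴ * P) *ᵥ v) = (2 * RCLike.re μ * r : ℝ) := by
    rw [add_mulVec, dotProduct_add, ← mulVec_mulVec, ← mulVec_mulVec, hXv,
      dotProduct_mulVec (star v) Xᴴ, ← star_mulVec, hXv, mulVec_smul, dotProduct_smul,
      star_smul, smul_dotProduct, ← hPv]
    push_cast
    rw [← RCLike.add_conj]
    simp only [smul_eq_mul, RCLike.star_def]
    ring
  have hneg := hX.dotProduct_mulVec_pos hv.2
  rw [neg_mulVec, dotProduct_neg, hquad, ← RCLike.ofReal_neg, RCLike.ofReal_pos] at hneg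
  nlinarith

theorem conjTranspose_map_ofReal {ι κ : Type*} (C : Matrix ι κ ℝ) :
    (C.map Complex.ofReal)ᴴ = Cᵀ.map Complex.ofReal := by
  ext; simp

section Complexification

variable {ι : Type*} [Fintype ι] [DecidableEq ι]

open scoped MatrixOrder in
theorem PosSemidef.map_ofReal {S : Matrix ι ι ℝ} (hS : S.PosSemidef) :
    (S.map Complex.ofReal).PosSemidef := by
  obtain ⟨C, hC⟩ := CStarAlgebra.nonneg_iff_eq_star_mul_self.mp hS.nonneg
  rw [star_eq_conjTranspose, conjTranspose_eq_transpose_of_trivial] at hC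
  have hS' : S.map Complex.ofReal = (C.map Complex.ofReal)ᴴ * C.map Complex.ofReal := by
    rw [hC, conjTranspose_map_ofReal]
    exact Matrix.map_mul (f := Complex.ofRealHom)
  rw [hS']
  exact posSemidef_conjTranspose_mul_self _

theorem PosDef.map_ofReal {S : Matrix ι ι ℝ} (hS : S.PosDef) :
    (S.map Complex.ofReal).PosDef := by
  rw [hS.posSemidef.map_ofReal.posDef_iff_det_ne_zero]
  change (Complex.ofRealHom.mapMatrix S).det ≠ 0
  rw [← RingHom.map_det, Complex.ofRealHom_eq_coe, Complex.ofReal_ne_zero]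
  exact hS.det_pos.ne'

theorem posDef_neg_lyapunov_of_riccati {κ : Type*} [Fintype κ] {A : Matrix ι ι ℝ}
    {B : Matrix ι κ ℝ} {P : Matrix ι ι ℝ} {δ : ℝ} (hP : P.IsSymm)
    (hRic : (-(P * A + Aᵀ * P - (2 * δ) • (P * B * Bᵀ * P) + 1)).PosDef) {c : ℂ}
    (hc : δ ≤ c.re) :
    PosDef (-(P.map Complex.ofReal * (A.map Complex.ofReal - c • (B * Bᵀ * P).map Complex.ofReal)
      + (A.map Complex.ofReal - c • (B * Bᵀ * P).map Complex.ofReal)ᴴ * P.map Complex.ofReal)) := by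
  set φ : Matrix ι ι ℝ →ₐ[ℝ] Matrix ι ι ℂ := (Algebra.ofId ℝ ℂ).mapMatrix
  have hφ (M : Matrix ι ι ℝ) : M.map Complex.ofReal = φ M := rfl
  have hφH (M : Matrix ι ι ℝ) : (φ M)ᴴ = φ Mᵀ := conjTranspose_map_ofReal M
  set Q := P * B * Bᵀ * P
  have hQl : P * (B * Bᵀ * P) = Q := by simp only [Q, Matrix.mul_assoc]
  have hQr : (B * Bᵀ * P)ᵀ * P = Q := by
    simp only [Q, transpose_mul, transpose_transpose, hP.eq, Matrix.mul_assoc]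
  have hQ : Q.PosSemidef := by
    have := posSemidef_conjTranspose_mul_self (Bᵀ * P)
    rwa [conjTranspose_eq_transpose_of_trivial, transpose_mul, transpose_transpose, hP.eq,
      ← Matrix.mul_assoc] at this
  have hconj : c • φ Q + star c • φ Q = (2 * c.re) • φ Q := by
    rw [← add_smul, Complex.star_def, Complex.add_conj, Complex.coe_smul]
  have hdecomp : -(φ P * (φ A - c • φ (B * Bᵀ * P)) + (φ A - c • φ (B * Bᵀ * P))ᴴ * φ P)
      = φ (-(P * A + Aᵀ * P - (2 * δ) • Q + 1)) + (2 * (c.re - δ)) • φ Q + 1 := by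
    simp only [conjTranspose_sub, conjTranspose_smul, hφH, mul_sub, sub_mul, mul_smul_comm,
      smul_mul_assoc, ← map_mul, map_neg, map_add, map_sub, map_smul, map_one, hQl, hQr]
    linear_combination (norm := module) hconj
  simp only [hφ, hdecomp]
  exact (hRic.map_ofReal.add_posSemidef (hQ.map_ofReal.smul (by linarith))).add_posSemidef
    PosSemidef.one

end Complexification

end Matrix

theorem kronecker_riccati_hurwitz {N n m : ℕ}
    (A : Matrix (Fin n) (Fin n) ℝ) (B : Matrix (Fin n) (Fin m) ℝ)
    (δ : ℝ) (P : Matrix (Fin n) (Fin n) ℝ) (hP : P.PosDef)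
    (hRic : (-(P * A + A.transpose * P - (2 * δ) • (P * B * B.transpose * P) + 1)).PosDef)
    (H : Matrix (Fin N) (Fin N) ℂ) (hH : ∀ μ ∈ spectrum ℂ H, δ ≤ μ.re) :
    ∀ μ ∈ spectrum ℂ
        (Matrix.kroneckerMap (· * ·) (1 : Matrix (Fin N) (Fin N) ℂ) (A.map Complex.ofReal)
          - Matrix.kroneckerMap (· * ·) H ((B * B.transpose * P).map Complex.ofReal)),
      μ.re < 0 := by
  intro μ hμ
  obtain ⟨c, hc, hμc⟩ := exists_mem_spectrum_of_mem_spectrum_one_kronecker_sub_kronecker _ _ H hμ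
  exact re_lt_zero_of_mem_spectrum_of_posDef_lyapunov hP.map_ofReal
    (posDef_neg_lyapunov_of_riccati (isHermitian_iff_isSymm.mp hP.isHermitian) hRic (hH c hc)) hμc
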